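/- arXiv:math/0506309 — 4 statements merged into one kernel-verified Lean document; each statement's English description precedes it below -/
import Mathlib

section
/- If E ⊆ M are operator systems (unital self-adjoint subspaces of B(H)) with M monotone complete, and there exists a positive linear map φ : M → E with φ restricted to E equal to the identity, then E is monotone complete: every bounded increasing net of self-adjoint elements of E has a least upper bound in E. -/
open scoped ComplexOrder

variable {H : Type} [NormedAddCommGroup H] [InnerProductSpace ℂ H] [CompleteSpace H]

/-- A subset `S` of `B(H)` is monotone complete if every norm-bounded increasing net of
self-adjoint elements of `S` has a least upper bound lying in `S` (least among the
upper bounds belonging to `S`, with respect to the Loewner order). -/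
def MonotoneCompleteSet (S : Set (H →L[ℂ] H)) : Prop :=
  ∀ (ι : Type) (_ : SemilatticeSup ι) (_ : Nonempty ι) (f : ι → H →L[ℂ] H),
    Monotone f → (∀ i, f i ∈ S ∧ IsSelfAdjoint (f i)) → (∃ C, ∀ i, ‖f i‖ ≤ C) →
    ∃ s ∈ S, (∀ i, f i ≤ s) ∧ ∀ u ∈ S, (∀ i, f i ≤ u) → s ≤ u

/-- If `E ⊆ M` are operator systems (unital self-adjoint subspaces of
`B(H)`) with `M` monotone complete, and there is a positive linear map `φ : M → E`
restricting to the identity on `E`, then `E` is monotone complete. -/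
theorem monotoneComplete_of_positive_projection
    (E M : Submodule ℂ (H →L[ℂ] H)) (hEM : E ≤ M)
    (hE1 : (1 : H →L[ℂ] H) ∈ E) (hEstar : ∀ x ∈ E, star x ∈ E)
    (hM1 : (1 : H →L[ℂ] H) ∈ M) (hMstar : ∀ x ∈ M, star x ∈ M)
    (hMc : MonotoneCompleteSet (M : Set (H →L[ℂ] H)))
    (φ : M →ₗ[ℂ] H →L[ℂ] H)
    (hφE : ∀ x : M, φ x ∈ E)
    (hφpos : ∀ x : M, 0 ≤ (x : H →L[ℂ] H) → 0 ≤ φ x)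
    (hφid : ∀ x : M, (x : H →L[ℂ] H) ∈ E → φ x = x) :
    MonotoneCompleteSet (E : Set (H →L[ℂ] H)) := by
  intro ι inst ne f hmono hf hbdd
  obtain ⟨s, hsM, hub, hlub⟩ :=
    hMc ι inst ne f hmono (fun i => ⟨hEM (hf i).1, (hf i).2⟩) hbdd
  refine ⟨φ ⟨s, hsM⟩, hφE _, ?_, ?_⟩
  · intro i
    have h1 : φ ⟨f i, hEM (hf i).1⟩ = f i := hφid _ (hf i).1
    have h2 : (0 : H →L[ℂ] H) ≤ φ (⟨s, hsM⟩ - ⟨f i, hEM (hf i).1⟩) :=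
      hφpos _ (by simpa using sub_nonneg.2 (hub i))
    rw [map_sub, h1] at h2
    exact sub_nonneg.1 h2
  · intro u huE hu
    have huM : u ∈ M := hEM huE
    have hsu : s ≤ u := hlub u huM hu
    have h1 : φ ⟨u, huM⟩ = u := hφid _ huE
    have h2 : (0 : H →L[ℂ] H) ≤ φ (⟨u, huM⟩ - ⟨s, hsM⟩) :=
      hφpos _ (by simpa using sub_nonneg.2 hsu)
    rw [map_sub, h1] at h2
    exact sub_nonneg.1 h2
end

section
/- If H is a separable Hilbert space and φ : B(H) → B(H) is a unital completely positive idempotent projection with range I, equipped with the Choi–Effros product x ∘ y = φ(xy), then any faithful state ω on B(H) restricts to a faithful state on the C*-algebra (I, ∘); in particular (I, ∘) admits a faithful state. -/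
open scoped ComplexOrder

/-- A matrix over a *-ring is positive if it factors as `Nᴴ * N`. -/
def IsPosMat {A : Type} [Ring A] [StarRing A] {n : ℕ}
    (M : Matrix (Fin n) (Fin n) A) : Prop :=
  ∃ N : Matrix (Fin n) (Fin n) A, M = N.conjTranspose * N

/-- A linear map between *-algebras is completely positive if all of its matrix
amplifications preserve positivity of matrices. -/
def IsCPFull {A B : Type} [Ring A] [StarRing A] [Module ℂ A]
    [Ring B] [StarRing B] [Module ℂ B] (φ : A →ₗ[ℂ] B) : Prop :=
  ∀ (n : ℕ) (M : Matrix (Fin n) (Fin n) A), IsPosMat M → IsPosMat (M.map φ)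

/-- The canonical 2×2 positive matrix `!![1, a; star a, star a * a]`. -/
lemma isPosMat_canonical {A : Type} [Ring A] [StarRing A] (a : A) :
    IsPosMat !![(1 : A), a; star a, star a * a] := by
  refine ⟨!![(1 : A), a; 0, 0], ?_⟩
  ext i j
  fin_cases i <;> fin_cases j <;>
    simp [Matrix.mul_apply, Fin.sum_univ_two, Matrix.conjTranspose_apply]

/-- Quadratic-form positivity for a 2×2 matrix of the form `Nᴴ * N` over a
star-ordered ring. -/
lemma quad_nonneg {A : Type} [Ring A] [StarRing A] [PartialOrder A]
    [StarOrderedRing A] (N : Matrix (Fin 2) (Fin 2) A) (u : Fin 2 → A) :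
    (0 : A) ≤ star (u 0) * (N.conjTranspose * N) 0 0 * u 0
      + star (u 0) * (N.conjTranspose * N) 0 1 * u 1
      + star (u 1) * (N.conjTranspose * N) 1 0 * u 0
      + star (u 1) * (N.conjTranspose * N) 1 1 * u 1 := by
  have key : star (u 0) * (N.conjTranspose * N) 0 0 * u 0
      + star (u 0) * (N.conjTranspose * N) 0 1 * u 1
      + star (u 1) * (N.conjTranspose * N) 1 0 * u 0
      + star (u 1) * (N.conjTranspose * N) 1 1 * u 1
      = star (N 0 0 * u 0 + N 0 1 * u 1) * (N 0 0 * u 0 + N 0 1 * u 1)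
      + star (N 1 0 * u 0 + N 1 1 * u 1) * (N 1 0 * u 0 + N 1 1 * u 1) := by
    simp only [Matrix.mul_apply, Fin.sum_univ_two, Matrix.conjTranspose_apply,
      star_add, star_mul]
    noncomm_ring
  rw [key]
  exact add_nonneg (star_mul_self_nonneg _) (star_mul_self_nonneg _)

/-- Let `H` be a separable Hilbert space and `φ : B(H) → B(H)` a
unital completely positive idempotent projection; its range `I`, equipped with the
Choi–Effros product `x ∘ y = φ(xy)`, is a C*-algebra.  Then any faithful state `ω` on
`B(H)` restricts to a faithful state on `(I, ∘)`: if `x` is in the range of `φ` and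
`ω(φ(x* x)) = 0` (that is, `ω(x* ∘ x) = 0`), then `x = 0`.  In particular `(I, ∘)`
admits a faithful state. -/
theorem faithful_state_on_ChoiEffros_range
    {H : Type} [NormedAddCommGroup H] [InnerProductSpace ℂ H] [CompleteSpace H]
    [TopologicalSpace.SeparableSpace H]
    (φ : (H →L[ℂ] H) →ₗ[ℂ] (H →L[ℂ] H))
    (hcp : IsCPFull φ) (hunital : φ 1 = 1) (hidem : ∀ x, φ (φ x) = φ x)
    (ω : (H →L[ℂ] H) →ₗ[ℂ] ℂ)
    (hstate : ω 1 = 1) (hωpos : ∀ a : H →L[ℂ] H, 0 ≤ a → 0 ≤ ω a)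
    (hfaithful : ∀ a : H →L[ℂ] H, 0 ≤ a → ω a = 0 → a = 0) :
    ∀ x : H →L[ℂ] H, φ x = x → ω (φ (star x * x)) = 0 → x = 0 := by
  intro x hx hω0
  obtain ⟨N, hN⟩ := hcp 2 _ (isPosMat_canonical x)
  -- entries of the amplified matrix
  have h00 : (Matrix.map !![(1 : H →L[ℂ] H), x; star x, star x * x] φ) 0 0 = 1 := by
    simp [hunital]
  have h01 : (Matrix.map !![(1 : H →L[ℂ] H), x; star x, star x * x] φ) 0 1 = x := by
    simp [hx]
  have h10 : (Matrix.map !![(1 : H →L[ℂ] H), x; star x, star x * x] φ) 1 0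
      = φ (star x) := by simp
  have h11 : (Matrix.map !![(1 : H →L[ℂ] H), x; star x, star x * x] φ) 1 1
      = φ (star x * x) := by simp
  -- self-adjointness of N ᴴ * N gives φ (star x) = star x
  have hsa : φ (star x) = star x := by
    have hherm : (N.conjTranspose * N).conjTranspose = N.conjTranspose * N := by
      rw [Matrix.conjTranspose_mul, Matrix.conjTranspose_conjTranspose]
    rw [← hN] at hherm
    have := congrArg (fun M => M 1 0) hherm
    simp only [Matrix.conjTranspose_apply] at this
    rw [h01, h10] at this
    exact this.symm
  -- Schwarz-type inequality: star x * x ≤ φ (star x * x)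
  have hquad := quad_nonneg N ![-x, 1]
  rw [← hN, h00, h01, h10, h11, hsa] at hquad
  have hS : (0 : H →L[ℂ] H) ≤ φ (star x * x) - star x * x := by
    have : star (![-x, (1 : H →L[ℂ] H)] 0) * 1 * ![-x, (1 : H →L[ℂ] H)] 0
        + star (![-x, (1 : H →L[ℂ] H)] 0) * x * ![-x, (1 : H →L[ℂ] H)] 1
        + star (![-x, (1 : H →L[ℂ] H)] 1) * star x * ![-x, (1 : H →L[ℂ] H)] 0
        + star (![-x, (1 : H →L[ℂ] H)] 1) * φ (star x * x) * ![-x, (1 : H →L[ℂ] H)] 1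
        = φ (star x * x) - star x * x := by
      simp only [Matrix.cons_val_zero, Matrix.cons_val_one, Matrix.head_cons,
        star_neg, star_one]
      noncomm_ring
    rwa [this] at hquad
  -- combine with the hypothesis ω (φ (star x * x)) = 0
  have hle : ω (star x * x) ≤ 0 := by
    have := hωpos _ hS
    rw [map_sub, hω0, zero_sub] at this
    exact neg_nonneg.mp this
  have hge : (0 : ℂ) ≤ ω (star x * x) := hωpos _ (star_mul_self_nonneg x)
  have hzero : ω (star x * x) = 0 := le_antisymm hle hge
  have := hfaithful _ (star_mul_self_nonneg x) hzero
  exact (CStarRing.star_mul_self_eq_zero_iff x).mp this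
end

section
/- The compact operators K(H) are order dense in B(H): for every positive operator h ∈ B(H), h is the least upper bound in B(H) of the set { k ∈ K(H) : 0 ≤ k ≤ h }. -/
/-!
For `h ≥ 0` and a vector `x`, compress `h` by the rank-one projection `p` onto `ℂ ∙ √h x`:
the operator `√h p √h` is compact, lies between `0` and `√h √h = h`, and agrees with `h` at `x`.
Hence any upper bound `b` of the compact operators below `h` satisfies
`⟪(b - h) x, x⟫ = ⟪(b - √h p √h) x, x⟫ ≥ 0` for every `x`, i.e. `h ≤ b`.
-/

open scoped InnerProductSpace

theorem Submodule.isCompactOperator_starProjection {𝕜 E : Type*} [RCLike 𝕜]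
    [NormedAddCommGroup E] [InnerProductSpace 𝕜 E] (U : Submodule 𝕜 E) [FiniteDimensional 𝕜 U] :
    IsCompactOperator U.starProjection :=
  (isCompactOperator_of_locallyCompactSpace_dom U.orthogonalProjectionOnto).clm_comp U.subtypeL

theorem ContinuousLinearMap.le_of_forall_exists_le_apply_eq {𝕜 E : Type*} [RCLike 𝕜]
    [NormedAddCommGroup E] [InnerProductSpace 𝕜 E] {a b : E →L[𝕜] E} (ha : a.IsSymmetric)
    (hb : b.IsSymmetric) (h : ∀ x, ∃ k ≤ b, k x = a x) : a ≤ b := by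
  refine ⟨hb.sub ha, fun x => ?_⟩
  obtain ⟨k, hkb, hkx⟩ := h x
  simpa [reApplyInnerSelf, hkx] using hkb.2 x

theorem ContinuousLinearMap.exists_isCompactOperator_nonneg_le_apply_eq {H : Type*}
    [NormedAddCommGroup H] [InnerProductSpace ℂ H] [CompleteSpace H] {h : H →L[ℂ] H}
    (hh : 0 ≤ h) (x : H) : ∃ k : H →L[ℂ] H, IsCompactOperator k ∧ 0 ≤ k ∧ k ≤ h ∧ k x = h x := by
  set s := CFC.sqrt h
  set U := ℂ ∙ s x
  have hs : 0 ≤ s := CFC.sqrt_nonneg h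
  have hss : s * s = h := CFC.sqrt_mul_sqrt_self h hh
  have hp : IsStarProjection U.starProjection := isStarProjection_starProjection
  refine ⟨s * U.starProjection * s, ?_, conjugate_nonneg_of_nonneg hp.nonneg hs, ?_, ?_⟩
  · exact (U.isCompactOperator_starProjection.comp_clm s).clm_comp s
  · simpa [hss] using conjugate_le_conjugate_of_nonneg hp.le_one hs
  · have hsx : U.starProjection (s x) = s x :=
      U.starProjection_eq_self_iff.mpr (Submodule.mem_span_singleton_self _)
    rw [← hss]
    exact congrArg s hsx

/-- The compact operators are order dense in `B(H)`: every positive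
`h ∈ B(H)` is the least upper bound (in the Loewner order on `B(H)`) of the set of
compact operators `k` with `0 ≤ k ≤ h`. -/
theorem compacts_orderDense_in_boundedOperators
    {H : Type} [NormedAddCommGroup H] [InnerProductSpace ℂ H] [CompleteSpace H]
    (h : H →L[ℂ] H) (hh : 0 ≤ h) :
    IsLUB {k : H →L[ℂ] H | IsCompactOperator k ∧ 0 ≤ k ∧ k ≤ h} h := by
  refine ⟨fun k hk => hk.2.2, fun b hb => ?_⟩
  have hb0 : 0 ≤ b := hb ⟨isCompactOperator_zero, le_rfl, hh⟩
  refine ContinuousLinearMap.le_of_forall_exists_le_apply_eq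
    ((h.nonneg_iff_isPositive.mp hh).isSymmetric) ((b.nonneg_iff_isPositive.mp hb0).isSymmetric)
    fun x => ?_
  obtain ⟨k, hk, hk0, hkh, hkx⟩ := h.exists_isCompactOperator_nonneg_le_apply_eq hh x
  exact ⟨k, hb ⟨hk, hk0, hkh⟩, hkx⟩
end

section
/- Let B be a monotone complete C*-algebra, b ∈ B, and let S be a nonempty upward-directed bounded set of positive elements of B with supremum s. Then b* s b = sup { b* a b : a ∈ S }. -/
section Aux
variable {B : Type} [NormedRing B] [StarRing B] [CStarRing B] [NormedAlgebra ℂ B]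
  [CompleteSpace B] [StarModule ℂ B] [PartialOrder B] [StarOrderedRing B]

/-- Conjugation by a unit is an order embedding on both sides, hence preserves LUBs. -/
lemma unit_conj_lub (v : Bˣ) {S : Set B} {s : B} (h : IsLUB S s) :
    IsLUB ((fun a => star (v : B) * a * (v : B)) '' S) (star (v : B) * s * (v : B)) := by
  have key : ∀ x : B, star ((↑v⁻¹ : B)) * (star (v : B) * x * (v : B)) * (↑v⁻¹ : B) = x := by
    intro x
    have h1 : star ((↑v⁻¹ : B)) * star (v : B) = 1 := by
      rw [← star_mul, v.mul_inv, star_one]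
    calc star ((↑v⁻¹ : B)) * (star (v : B) * x * (v : B)) * (↑v⁻¹ : B)
        = (star ((↑v⁻¹ : B)) * star (v : B)) * x * ((v : B) * (↑v⁻¹ : B)) := by
          noncomm_ring
      _ = x := by rw [h1, v.mul_inv, one_mul, mul_one]
  constructor
  · rintro _ ⟨a, ha, rfl⟩
    exact star_left_conjugate_le_conjugate (h.1 ha) _
  · rintro m hm
    have h2 : ∀ a ∈ S, a ≤ star ((↑v⁻¹ : B)) * m * (↑v⁻¹ : B) := fun a ha => by
      have := star_left_conjugate_le_conjugate (hm ⟨a, ha, rfl⟩) (↑v⁻¹ : B)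
      rwa [key] at this
    have h3 : s ≤ star ((↑v⁻¹ : B)) * m * (↑v⁻¹ : B) := h.2 h2
    have := star_left_conjugate_le_conjugate h3 (v : B)
    have key2 : star (v : B) * (star ((↑v⁻¹ : B)) * m * (↑v⁻¹ : B)) * (v : B) = m := by
      have h1 : star (v : B) * star ((↑v⁻¹ : B)) = 1 := by
        rw [← star_mul, v.inv_mul, star_one]
      calc star (v : B) * (star ((↑v⁻¹ : B)) * m * (↑v⁻¹ : B)) * (v : B)
          = (star (v : B) * star ((↑v⁻¹ : B))) * m * ((↑v⁻¹ : B) * (v : B)) := by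
            noncomm_ring
        _ = m := by rw [h1, v.inv_mul, one_mul, mul_one]
    rwa [key2] at this

lemma isUnit_add_smul_one (b : B) (z : ℂ) (h : ‖b‖ < ‖z‖) : IsUnit (b + z • 1) := by
  have hz : z ≠ 0 := by
    intro h0; rw [h0, norm_zero] at h; exact absurd h (not_lt.mpr (norm_nonneg b))
  have hnorm : ‖z⁻¹ • b‖ < 1 := by
    rw [norm_smul, norm_inv]
    calc ‖z‖⁻¹ * ‖b‖ < ‖z‖⁻¹ * ‖z‖ := by
          apply mul_lt_mul_of_pos_left h (inv_pos.mpr (lt_of_le_of_lt (norm_nonneg b) h))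
      _ = 1 := inv_mul_cancel₀ (ne_of_gt (lt_of_le_of_lt (norm_nonneg b) h))
  have hu1 : IsUnit ((1 : B) + z⁻¹ • b) := by
    have := (Units.oneSub (-(z⁻¹ • b)) (by rwa [norm_neg])).isUnit
    rwa [Units.val_oneSub, sub_neg_eq_add] at this
  have hu2 : IsUnit (z • (1 : B)) := by
    refine ⟨⟨z • (1 : B), z⁻¹ • (1 : B), ?_, ?_⟩, rfl⟩
    · rw [smul_mul_smul_comm, one_mul, mul_inv_cancel₀ hz, one_smul]
    · rw [smul_mul_smul_comm, one_mul, inv_mul_cancel₀ hz, one_smul]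
  have heq : (z • (1 : B)) * ((1 : B) + z⁻¹ • b) = b + z • 1 := by
    rw [mul_add, mul_one, smul_mul_assoc, one_mul, smul_smul, mul_inv_cancel₀ hz, one_smul,
      add_comm]
  have := hu2.mul hu1
  rwa [heq] at this

end Aux


/-- In a monotone complete C*-algebra `B`, conjugation `x ↦ b* x b`
preserves suprema of bounded upward-directed sets of positive elements: if `S` is a
nonempty upward-directed bounded set of positive elements with supremum `s`, then
`b* s b = sup { b* a b : a ∈ S }`. -/
theorem conjugation_preserves_sup
    {B : Type} [NormedRing B] [StarRing B] [CStarRing B] [NormedAlgebra ℂ B]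
    [CompleteSpace B] [StarModule ℂ B] [PartialOrder B] [StarOrderedRing B]
    (hmc : ∀ T : Set B, T.Nonempty → (∀ x ∈ T, IsSelfAdjoint x) →
      DirectedOn (· ≤ ·) T → BddAbove T → ∃ m, IsLUB T m)
    (b : B) (S : Set B) (s : B)
    (hS : S.Nonempty) (hpos : ∀ a ∈ S, 0 ≤ a)
    (hdir : DirectedOn (· ≤ ·) S) (hbdd : BddAbove S)
    (hsup : IsLUB S s) :
    IsLUB ((fun a => star b * a * b) '' S) (star b * s * b) := by
  set t : ℝ := ‖b‖ + 1 with ht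
  have htpos : (0 : ℝ) < t := by positivity
  set z : ℂ := (t : ℂ) with hz
  have hzn : ‖z‖ = t := by
    rw [hz, Complex.norm_real, Real.norm_eq_abs, abs_of_pos htpos]
  have hlt : ‖b‖ < ‖z‖ := by rw [hzn]; linarith
  set r : B := z • (1 : B) with hr
  have hrstar : star r = r := by
    rw [hr, star_smul, star_one, hz, Complex.star_def, Complex.conj_ofReal]
  set v : B := b + r with hvdef
  set w : B := b - r with hwdef
  have hv : IsUnit v := by rw [hvdef, hr]; exact isUnit_add_smul_one b z hlt
  have hw : IsUnit w := by
    have h1 : w = b + (-z) • (1 : B) := by rw [hwdef, hr, neg_smul, ← sub_eq_add_neg]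
    rw [h1]
    exact isUnit_add_smul_one b (-z) (by rwa [norm_neg])
  have key : ∀ x : B, star v * x * v + star w * x * w
      = (star b * x * b + star b * x * b) + (star r * x * r + star r * x * r) := by
    intro x
    simp only [hvdef, hwdef, star_add, star_sub, hrstar]
    noncomm_ring
  have hvlub : IsLUB ((fun a => star v * a * v) '' S) (star v * s * v) := by
    have := unit_conj_lub hv.unit hsup
    rwa [hv.unit_spec] at this
  have hwlub : IsLUB ((fun a => star w * a * w) '' S) (star w * s * w) := by
    have := unit_conj_lub hw.unit hsup
    rwa [hw.unit_spec] at this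
  constructor
  · rintro _ ⟨a, ha, rfl⟩
    exact star_left_conjugate_le_conjugate (hsup.1 ha) b
  · rintro u hu
    have hub : ∀ a ∈ S, star b * a * b ≤ u := fun a ha => hu ⟨a, ha, rfl⟩
    set M : B := (u + u) + (star r * s * r + star r * s * r) with hM
    have claim1 : ∀ a ∈ S, ∀ a' ∈ S, star v * a' * v + star w * a * w ≤ M := by
      intro a ha a' ha'
      obtain ⟨c, hc, hac, ha'c⟩ := hdir a ha a' ha'
      calc star v * a' * v + star w * a * w
          ≤ star v * c * v + star w * c * w :=
            add_le_add (star_left_conjugate_le_conjugate ha'c v) (star_left_conjugate_le_conjugate hac w)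
        _ = (star b * c * b + star b * c * b) + (star r * c * r + star r * c * r) := key c
        _ ≤ M :=
            add_le_add (add_le_add (hub c hc) (hub c hc))
              (add_le_add (star_left_conjugate_le_conjugate (hsup.1 hc) r)
                (star_left_conjugate_le_conjugate (hsup.1 hc) r))
    have claim2 : ∀ a ∈ S, star v * s * v ≤ M - star w * a * w := by
      intro a ha
      apply hvlub.2
      rintro _ ⟨a', ha', rfl⟩
      exact le_sub_iff_add_le.mpr (claim1 a ha a' ha')
    have claim3 : star w * s * w ≤ M - star v * s * v := by
      apply hwlub.2
      rintro _ ⟨a, ha, rfl⟩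
      exact le_sub_comm.mp (claim2 a ha)
    have claim4 : star v * s * v + star w * s * w ≤ M := by
      have h1 := le_sub_iff_add_le.mp claim3
      rwa [add_comm] at h1
    have claim5 : (star b * s * b) + (star b * s * b) ≤ u + u := by
      have h1 : (star b * s * b + star b * s * b) + (star r * s * r + star r * s * r)
          ≤ (u + u) + (star r * s * r + star r * s * r) := by
        rw [← key s]; exact claim4
      exact le_of_add_le_add_right h1
    set d : B := u - star b * s * b with hd
    have hd2 : 0 ≤ d + d := by
      have h2 := sub_nonneg.mpr claim5
      have h3 : (u + u) - (star b * s * b + star b * s * b) = d + d := by rw [hd]; abel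
      rwa [h3] at h2
    set γ : ℂ := (((Real.sqrt 2)⁻¹ : ℝ) : ℂ) with hγ
    have hγ2 : γ * γ * 2 = (1 : ℂ) := by
      rw [hγ, ← Complex.ofReal_mul, ← mul_inv,
        Real.mul_self_sqrt (by norm_num : (0:ℝ) ≤ 2)]
      norm_num
    have hγs : star (γ • (1 : B)) = γ • (1 : B) := by
      rw [star_smul, star_one, hγ, Complex.star_def, Complex.conj_ofReal]
    have hconj : star (γ • (1 : B)) * (d + d) * (γ • (1 : B)) = d := by
      rw [hγs, smul_mul_assoc, one_mul, smul_mul_smul_comm, mul_one,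
        ← two_smul ℂ d, smul_smul, hγ2, one_smul]
    have h4 := star_left_conjugate_nonneg hd2 (γ • (1 : B))
    rw [hconj] at h4
    rw [hd] at h4
    exact sub_nonneg.mp h4
end
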